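/- Let 2 ≤ r ≤ n and let T be an (r × n, n)-near triple array (i.e., an r × n near Youden rectangle). For any column j0, the r × (n − 1) design T′ obtained from T by deleting column j0 is an (r × (n − 1), n)-near triple array. -/

import Mathlib

open Finset

/-- An `r × c` row-column design on `v` symbols is binary if no symbol occurs
twice in any row or in any column. -/
def IsBinaryDesign {r c v : ℕ} (T : Fin r × Fin c → Fin v) : Prop :=
  (∀ (i : Fin r) (j j' : Fin c), j ≠ j' → T (i, j) ≠ T (i, j')) ∧
  (∀ (j : Fin c) (i i' : Fin r), i ≠ i' → T (i, j) ≠ T (i', j))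

/-- The replication number of a symbol `s`: the number of cells containing `s`. -/
def replNum {r c v : ℕ} (T : Fin r × Fin c → Fin v) (s : Fin v) : ℕ :=
  (Finset.univ.filter (fun p : Fin r × Fin c => T p = s)).card

/-- The average replication number `e = rc/v` as a rational number. -/
def avgRepl (r c v : ℕ) : ℚ := ((r : ℚ) * (c : ℚ)) / (v : ℚ)

/-- A design is equireplicate if `e = rc/v` is an integer and every symbol has
replication number `e`. -/
def IsEquireplicate {r c v : ℕ} (T : Fin r × Fin c → Fin v) : Prop :=
  (avgRepl r c v).den = 1 ∧ ∀ s : Fin v, (replNum T s : ℚ) = avgRepl r c v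

/-- A design is near equireplicate if `e = rc/v` is not an integer and every symbol
has replication number `⌊e⌋` or `⌈e⌉`. -/
def IsNearEquireplicate {r c v : ℕ} (T : Fin r × Fin c → Fin v) : Prop :=
  (avgRepl r c v).den ≠ 1 ∧
  ∀ s : Fin v, (replNum T s : ℤ) = ⌊avgRepl r c v⌋ ∨ (replNum T s : ℤ) = ⌈avgRepl r c v⌉

/-- The set of symbols occurring in row `i`. -/
def rowSet {r c v : ℕ} (T : Fin r × Fin c → Fin v) (i : Fin r) : Finset (Fin v) :=
  Finset.univ.image (fun j : Fin c => T (i, j))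

/-- The set of symbols occurring in column `j`. -/
def colSet {r c v : ℕ} (T : Fin r × Fin c → Fin v) (j : Fin c) : Finset (Fin v) :=
  Finset.univ.image (fun i : Fin r => T (i, j))

/-- Average row-column intersection size `λ_rc`. -/
def lamRC {r c v : ℕ} (T : Fin r × Fin c → Fin v) : ℚ :=
  (∑ i : Fin r, ∑ j : Fin c, ((rowSet T i ∩ colSet T j).card : ℚ)) / ((r : ℚ) * (c : ℚ))

/-- Average row-row intersection size `λ_rr`. -/
def lamRR {r c v : ℕ} (T : Fin r × Fin c → Fin v) : ℚ :=
  (∑ p ∈ Finset.univ.filter (fun p : Fin r × Fin r => p.1 < p.2),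
      ((rowSet T p.1 ∩ rowSet T p.2).card : ℚ)) / ((r : ℚ) * ((r : ℚ) - 1) / 2)

/-- Average column-column intersection size `λ_cc`. -/
def lamCC {r c v : ℕ} (T : Fin r × Fin c → Fin v) : ℚ :=
  (∑ p ∈ Finset.univ.filter (fun p : Fin c × Fin c => p.1 < p.2),
      ((colSet T p.1 ∩ colSet T p.2).card : ℚ)) / ((c : ℚ) * ((c : ℚ) - 1) / 2)

/-- An `(r × c, v)`-near triple array. -/
def IsNearTripleArray {r c v : ℕ} (T : Fin r × Fin c → Fin v) : Prop :=
  IsBinaryDesign T ∧ (IsEquireplicate T ∨ IsNearEquireplicate T) ∧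
  (∀ (i : Fin r) (j : Fin c),
    ((rowSet T i ∩ colSet T j).card : ℤ) = ⌊lamRC T⌋ ∨
    ((rowSet T i ∩ colSet T j).card : ℤ) = ⌈lamRC T⌉) ∧
  (∀ i j : Fin r, i ≠ j →
    ((rowSet T i ∩ rowSet T j).card : ℤ) = ⌊lamRR T⌋ ∨
    ((rowSet T i ∩ rowSet T j).card : ℤ) = ⌈lamRR T⌉) ∧
  (∀ i j : Fin c, i ≠ j →
    ((colSet T i ∩ colSet T j).card : ℤ) = ⌊lamCC T⌋ ∨
    ((colSet T i ∩ colSet T j).card : ℤ) = ⌈lamCC T⌉)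

/-!
Every row of `T` is a permutation of the `n` symbols, so after deleting column `j0` row `i`
consists of all symbols but `T (i, j0)`. Hence two rows meet in exactly `n - 2` symbols, a row
and a column meet in `r` or `r - 1` symbols (the column's `r` symbols, possibly minus `T (i, j0)`),
and a symbol occurs `r - 1` or `r` times according as it lies in column `j0` or not; the column
intersections are those of `T`. A binary design in which each of these four statistics takes at
most two consecutive values is a near triple array, because such values are always the floor or
the ceiling of their average.
-/

open Function

theorem natCast_eq_floor_or_eq_ceil_avg {α : Type*} {s : Finset α} {f : α → ℕ} {a : ℤ}
    (hf : ∀ y ∈ s, a ≤ f y ∧ (f y : ℤ) ≤ a + 1) {x : α} (hx : x ∈ s) :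
    (f x : ℤ) = ⌊(∑ y ∈ s, (f y : ℚ)) / #s⌋ ∨ (f x : ℤ) = ⌈(∑ y ∈ s, (f y : ℚ)) / #s⌉ := by
  have hs : (0 : ℚ) < #s := by exact_mod_cast card_pos.mpr ⟨x, hx⟩
  have hlo : ∀ y ∈ s, (a : ℚ) ≤ f y := fun y hy => by exact_mod_cast (hf y hy).1
  have hhi : ∀ y ∈ s, (f y : ℚ) ≤ a + 1 := fun y hy => by exact_mod_cast (hf y hy).2
  have hsum_lo : #s * (a : ℚ) ≤ ∑ y ∈ s, (f y : ℚ) :=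
    nsmul_eq_mul (#s) (a : ℚ) ▸ card_nsmul_le_sum s (fun y => (f y : ℚ)) a hlo
  have hsum_hi : ∑ y ∈ s, (f y : ℚ) ≤ #s * ((a : ℚ) + 1) :=
    nsmul_eq_mul (#s) ((a : ℚ) + 1) ▸ sum_le_card_nsmul s (fun y => (f y : ℚ)) (a + 1) hhi
  rcases (by have := hf x hx; omega : (f x : ℤ) = a ∨ (f x : ℤ) = a + 1) with h | h
  · -- one value strictly below `a + 1` keeps the average strictly below it
    have hsum_lt : ∑ y ∈ s, (f y : ℚ) < ∑ _y ∈ s, ((a : ℚ) + 1) :=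
      sum_lt_sum hhi ⟨x, hx, by rw [show (f x : ℚ) = a by exact_mod_cast h]; linarith⟩
    rw [sum_const, nsmul_eq_mul] at hsum_lt
    left
    rw [h, eq_comm, Int.floor_eq_iff, le_div_iff₀ hs, div_lt_iff₀ hs]
    constructor <;> linarith
  · have hsum_gt : ∑ _y ∈ s, (a : ℚ) < ∑ y ∈ s, (f y : ℚ) :=
      sum_lt_sum hlo ⟨x, hx, by rw [show (f x : ℚ) = a + 1 by exact_mod_cast h]; linarith⟩
    rw [sum_const, nsmul_eq_mul] at hsum_gt
    right
    rw [h, eq_comm, Int.ceil_eq_iff, lt_div_iff₀ hs, div_le_iff₀ hs]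
    push_cast
    constructor <;> linarith

theorem natCast_eq_floor_or_eq_ceil_pairAvg {k : ℕ} (f : Fin k → Fin k → ℕ)
    (hsymm : ∀ i j, f i j = f j i) (a : ℤ)
    (hf : ∀ i j, i ≠ j → a ≤ f i j ∧ (f i j : ℤ) ≤ a + 1) {i j : Fin k} (hij : i ≠ j) :
    (f i j : ℤ) = ⌊(∑ p ∈ univ.filter (fun p : Fin k × Fin k => p.1 < p.2), (f p.1 p.2 : ℚ)) /
        ((k : ℚ) * ((k : ℚ) - 1) / 2)⌋ ∨
      (f i j : ℤ) = ⌈(∑ p ∈ univ.filter (fun p : Fin k × Fin k => p.1 < p.2), (f p.1 p.2 : ℚ)) /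
        ((k : ℚ) * ((k : ℚ) - 1) / 2)⌉ := by
  have hcard : ((#(univ.filter (fun p : Fin k × Fin k => p.1 < p.2)) : ℕ) : ℚ) =
      (k : ℚ) * ((k : ℚ) - 1) / 2 := by
    rw [Fintype.card_product_filter_lt, Fintype.card_fin, Nat.cast_choose_two]
  rw [← hcard]
  wlog hlt : i < j generalizing i j
  · rw [hsymm]
    exact this hij.symm (hij.lt_or_gt.resolve_left hlt)
  exact natCast_eq_floor_or_eq_ceil_avg (s := univ.filter fun p : Fin k × Fin k => p.1 < p.2)
    (f := fun p => f p.1 p.2) (fun p hp => hf p.1 p.2 (mem_filter.mp hp).2.ne)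
    (mem_filter.mpr ⟨mem_univ (i, j), hlt⟩)

section Design

variable {r c v : ℕ} {T : Fin r × Fin c → Fin v}

theorem IsBinaryDesign.injective_row (hT : IsBinaryDesign T) (i : Fin r) :
    Injective fun j => T (i, j) :=
  fun _ _ => not_imp_not.mp (hT.1 i _ _)

theorem IsBinaryDesign.injective_col (hT : IsBinaryDesign T) (j : Fin c) :
    Injective fun i => T (i, j) :=
  fun _ _ => not_imp_not.mp (hT.2 j _ _)

theorem IsBinaryDesign.card_colSet (hT : IsBinaryDesign T) (j : Fin c) : #(colSet T j) = r := by
  rw [colSet, card_image_of_injective _ (hT.injective_col j), card_univ, Fintype.card_fin]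

theorem IsBinaryDesign.replNum_eq_card_rows (hT : IsBinaryDesign T) (s : Fin v) :
    replNum T s = #{i | s ∈ rowSet T i} := by
  apply card_bij (fun p _ => p.1)
  · rintro ⟨i, j⟩ hp
    simp only [mem_filter, mem_univ, true_and, rowSet, mem_image] at hp ⊢
    exact ⟨j, hp⟩
  · rintro ⟨i, j⟩ hp ⟨i', j'⟩ hp' rfl
    simp only [mem_filter, mem_univ, true_and] at hp hp'
    rw [hT.injective_row i (hp.trans hp'.symm)]
  · intro i hi
    simp only [mem_filter, mem_univ, true_and, rowSet, mem_image] at hi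
    obtain ⟨j, hj⟩ := hi
    exact ⟨(i, j), by simpa using hj, rfl⟩

theorem sum_replNum (T : Fin r × Fin c → Fin v) : ∑ s, replNum T s = r * c := by
  simp only [replNum]
  rw [← card_eq_sum_card_fiberwise fun p _ => mem_univ (T p)]
  simp

theorem isEquireplicate_or_isNearEquireplicate_of_bounds (e : ℤ)
    (hrepl : ∀ s, e ≤ replNum T s ∧ (replNum T s : ℤ) ≤ e + 1) :
    IsEquireplicate T ∨ IsNearEquireplicate T := by
  rcases Nat.eq_zero_or_pos v with rfl | hv
  · exact Or.inl ⟨by simp [avgRepl], fun s => s.elim0⟩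
  have havg : avgRepl r c v = (∑ s, (replNum T s : ℚ)) / #(univ : Finset (Fin v)) := by
    rw [avgRepl, ← Nat.cast_mul, ← sum_replNum T, card_univ, Fintype.card_fin, Nat.cast_sum]
  have hmem s : (replNum T s : ℤ) = ⌊avgRepl r c v⌋ ∨ (replNum T s : ℤ) = ⌈avgRepl r c v⌉ := by
    rw [havg]
    exact natCast_eq_floor_or_eq_ceil_avg (fun s _ => hrepl s) (mem_univ s)
  by_cases hden : (avgRepl r c v).den = 1
  · refine Or.inl ⟨hden, fun s => ?_⟩
    rw [← (Rat.den_eq_one_iff _).mp hden] at hmem ⊢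
    simp only [Int.floor_intCast, Int.ceil_intCast, or_self] at hmem
    exact_mod_cast hmem s
  · exact Or.inr ⟨hden, hmem⟩

theorem lamRC_eq_avg (T : Fin r × Fin c → Fin v) :
    lamRC T = (∑ p : Fin r × Fin c, (#(rowSet T p.1 ∩ colSet T p.2) : ℚ)) /
      #(univ : Finset (Fin r × Fin c)) := by
  rw [lamRC, ← Fintype.sum_prod_type' (fun i j => (#(rowSet T i ∩ colSet T j) : ℚ)), card_univ,
    Fintype.card_prod, Fintype.card_fin, Fintype.card_fin, Nat.cast_mul]

theorem isNearTripleArray_of_bounds (hT : IsBinaryDesign T) (e lrc lrr lcc : ℤ)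
    (hrepl : ∀ s, e ≤ replNum T s ∧ (replNum T s : ℤ) ≤ e + 1)
    (hrc : ∀ i j, lrc ≤ #(rowSet T i ∩ colSet T j) ∧ (#(rowSet T i ∩ colSet T j) : ℤ) ≤ lrc + 1)
    (hrr : ∀ i i', i ≠ i' →
      lrr ≤ #(rowSet T i ∩ rowSet T i') ∧ (#(rowSet T i ∩ rowSet T i') : ℤ) ≤ lrr + 1)
    (hcc : ∀ j j', j ≠ j' →
      lcc ≤ #(colSet T j ∩ colSet T j') ∧ (#(colSet T j ∩ colSet T j') : ℤ) ≤ lcc + 1) :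
    IsNearTripleArray T := by
  refine ⟨hT, isEquireplicate_or_isNearEquireplicate_of_bounds e hrepl, fun i j => ?_,
    fun i i' h => ?_, fun j j' h => ?_⟩
  · rw [lamRC_eq_avg]
    exact natCast_eq_floor_or_eq_ceil_avg
      (f := fun p : Fin r × Fin c => #(rowSet T p.1 ∩ colSet T p.2)) (fun p _ => hrc p.1 p.2)
      (mem_univ (i, j))
  · exact natCast_eq_floor_or_eq_ceil_pairAvg (fun i i' => #(rowSet T i ∩ rowSet T i'))
      (fun _ _ => by rw [inter_comm]) lrr hrr h
  · exact natCast_eq_floor_or_eq_ceil_pairAvg (fun j j' => #(colSet T j ∩ colSet T j'))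
      (fun _ _ => by rw [inter_comm]) lcc hcc h

end Design

def restrictCols {r c c' v : ℕ} (T : Fin r × Fin c → Fin v) (g : Fin c' → Fin c) :
    Fin r × Fin c' → Fin v :=
  fun p => T (p.1, g p.2)

section RestrictCols

variable {r c c' v : ℕ} {T : Fin r × Fin c → Fin v} {g : Fin c' → Fin c}

theorem IsBinaryDesign.restrictCols (hT : IsBinaryDesign T) (hg : Injective g) :
    IsBinaryDesign (restrictCols T g) :=
  ⟨fun i _ _ h => hT.1 i _ _ (hg.ne h), fun j _ _ h => hT.2 (g j) _ _ h⟩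

theorem colSet_restrictCols (j : Fin c') : colSet (restrictCols T g) j = colSet T (g j) := rfl

theorem card_colSet_inter_restrictCols_bounds
    (hcc : ∀ j j' : Fin c, j ≠ j' →
      (#(colSet T j ∩ colSet T j') : ℤ) = ⌊lamCC T⌋ ∨
      (#(colSet T j ∩ colSet T j') : ℤ) = ⌈lamCC T⌉)
    (hg : Injective g) (j j' : Fin c') (h : j ≠ j') :
    ⌊lamCC T⌋ ≤ #(colSet (restrictCols T g) j ∩ colSet (restrictCols T g) j') ∧
      (#(colSet (restrictCols T g) j ∩ colSet (restrictCols T g) j') : ℤ) ≤ ⌊lamCC T⌋ + 1 := by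
  have := Int.floor_le_ceil (lamCC T)
  have := Int.ceil_le_floor_add_one (lamCC T)
  rcases hcc (g j) (g j') (hg.ne h) with h' | h' <;> simp only [colSet_restrictCols, h'] <;> omega

end RestrictCols

def skipCol {n : ℕ} (j0 : Fin n) (j : Fin (n - 1)) : Fin n :=
  if h : (j : ℕ) < j0 then ⟨j, h.trans j0.isLt⟩ else ⟨j + 1, Nat.add_lt_of_lt_sub j.isLt⟩

theorem skipCol_injective {n : ℕ} (j0 : Fin n) : Injective (skipCol j0) := by
  intro j j' h
  simp only [skipCol] at h
  split_ifs at h <;> simp only [Fin.mk.injEq] at h <;> ext <;> omega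

theorem skipCol_ne {n : ℕ} (j0 : Fin n) (j : Fin (n - 1)) : skipCol j0 j ≠ j0 := by
  simp only [skipCol]
  split_ifs <;> simp only [ne_eq, Fin.ext_iff] <;> omega

section DeleteColumn

variable {r n : ℕ} {T : Fin r × Fin n → Fin n} {g : Fin (n - 1) → Fin n} {j0 : Fin n}

theorem rowSet_restrictCols_eq_compl (hT : IsBinaryDesign T) (hg : Injective g)
    (hg0 : ∀ j, g j ≠ j0) (i : Fin r) :
    rowSet (restrictCols T g) i = {T (i, j0)}ᶜ := by
  apply eq_of_subset_of_card_le
  · intro x hx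
    obtain ⟨j, -, rfl⟩ := mem_image.mp hx
    simp only [mem_compl, mem_singleton]
    exact (hT.injective_row i).ne (hg0 j)
  · rw [card_compl, card_singleton, Fintype.card_fin, rowSet,
      card_image_of_injective _ ((hT.restrictCols hg).injective_row i), card_univ,
      Fintype.card_fin]

variable (hT : IsBinaryDesign T) (hg : Injective g) (hg0 : ∀ j, g j ≠ j0)
include hT hg hg0

theorem replNum_restrictCols_bounds (s : Fin n) :
    (r : ℤ) - 1 ≤ replNum (restrictCols T g) s ∧ (replNum (restrictCols T g) s : ℤ) ≤ r := by
  rw [(hT.restrictCols hg).replNum_eq_card_rows]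
  simp only [rowSet_restrictCols_eq_compl hT hg hg0, mem_compl, mem_singleton]
  have hcol : #{i | s = T (i, j0)} ≤ 1 := card_le_one.mpr fun i hi i' hi' =>
    hT.injective_col j0 ((mem_filter.mp hi).2.symm.trans (mem_filter.mp hi').2)
  have hsplit := card_filter_add_card_filter_not (s := (univ : Finset (Fin r)))
    (p := fun i => s = T (i, j0))
  rw [card_univ, Fintype.card_fin] at hsplit
  omega

theorem card_rowSet_inter_colSet_restrictCols_bounds (i : Fin r) (j : Fin (n - 1)) :
    (r : ℤ) - 1 ≤ #(rowSet (restrictCols T g) i ∩ colSet (restrictCols T g) j) ∧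
      (#(rowSet (restrictCols T g) i ∩ colSet (restrictCols T g) j) : ℤ) ≤ r := by
  rw [rowSet_restrictCols_eq_compl hT hg hg0, colSet_restrictCols, inter_comm,
    ← sdiff_eq_inter_compl, ← erase_eq]
  have := pred_card_le_card_erase (s := colSet T (g j)) (a := T (i, j0))
  have := card_erase_le (s := colSet T (g j)) (a := T (i, j0))
  rw [hT.card_colSet] at *
  omega

theorem card_rowSet_inter_rowSet_restrictCols {i i' : Fin r} (h : i ≠ i') :
    #(rowSet (restrictCols T g) i ∩ rowSet (restrictCols T g) i') = n - 2 := by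
  rw [rowSet_restrictCols_eq_compl hT hg hg0, rowSet_restrictCols_eq_compl hT hg hg0,
    ← compl_union, ← insert_eq, card_compl, card_pair ((hT.injective_col j0).ne h),
    Fintype.card_fin]

end DeleteColumn

/-- Deleting any column from an `(r × n, n)`-near triple array
(a near Youden rectangle) yields an `(r × (n − 1), n)`-near triple array. -/
theorem nearTripleArray_delete_column {r n : ℕ}
    (T : Fin r × Fin n → Fin n) (hT : IsNearTripleArray T) (j0 : Fin n)
    (T' : Fin r × Fin (n - 1) → Fin n)
    (hT' : ∀ (i : Fin r) (j : Fin (n - 1)),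
      T' (i, j) = T (i, if h : (j : ℕ) < (j0 : ℕ)
        then ⟨(j : ℕ), h.trans j0.isLt⟩
        else ⟨(j : ℕ) + 1, by have := j.isLt; omega⟩)) :
    IsNearTripleArray T' := by
  obtain ⟨hbin, -, -, -, hcc⟩ := hT
  obtain rfl : T' = restrictCols T (skipCol j0) := funext fun p => hT' p.1 p.2
  have hg := skipCol_injective j0
  have hg0 := skipCol_ne j0
  refine isNearTripleArray_of_bounds (hbin.restrictCols hg) (r - 1) (r - 1) (n - 2 : ℕ)
    ⌊lamCC T⌋ (fun s => ?_) (fun i j => ?_) (fun i i' h => ?_)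
    (card_colSet_inter_restrictCols_bounds hcc hg)
  · simpa using replNum_restrictCols_bounds hbin hg hg0 s
  · simpa using card_rowSet_inter_colSet_restrictCols_bounds hbin hg hg0 i j
  · simp [card_rowSet_inter_rowSet_restrictCols hbin hg hg0 h]
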